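/- arXiv:1901.01524 — 5 statements merged into one kernel-verified Lean document; each statement's English description precedes it below -/
import Mathlib

section
/- Let N be a positive integer and let m ≥ max(N², 51N) be an integer (or m arbitrary if N = 1). Then there exist positive integers n₁, …, n_k such that: (a) n₁ + ⋯ + n_k = m; (b) nᵢ ≥ N for all i; (c) for every proper divisor d of m (d ∣ m, d ≠ m) there exists 1 ≤ i ≤ k−1 such that d divides n₁ + ⋯ + nᵢ. -/
/-! Auxiliary lemmas for the arithmetical lemma. -/

private lemma bad_card_bound {b N y p : ℕ} (hb : 0 < b) :
    (((Finset.range (p+1)).filter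
        (fun c => ¬(c*b + N ≤ y ∨ y + N ≤ c*b))).card) * b ≤ 2*N - 2 + b := by
  classical
  set B := (Finset.range (p+1)).filter (fun c => ¬(c*b + N ≤ y ∨ y + N ≤ c*b)) with hB
  rcases B.eq_empty_or_nonempty with h | h
  · simp [h]
  · have hc0 := B.min'_mem h
    have hc1 := B.max'_mem h
    set c0 := B.min' h with hc0d
    set c1 := B.max' h with hc1d
    have h0 : ¬(c0*b + N ≤ y ∨ y + N ≤ c0*b) := (Finset.mem_filter.1 hc0).2
    have h1 : ¬(c1*b + N ≤ y ∨ y + N ≤ c1*b) := (Finset.mem_filter.1 hc1).2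
    push_neg at h0 h1
    have hsub : B ⊆ Finset.Icc c0 c1 := fun c hc =>
      Finset.mem_Icc.2 ⟨B.min'_le c hc, B.le_max' c hc⟩
    have hcard : B.card ≤ c1 + 1 - c0 := by
      have := Finset.card_le_card hsub
      simpa [Nat.card_Icc] using this
    have hle : c0 ≤ c1 := B.min'_le c1 hc1
    have step1 : B.card * b ≤ (c1 + 1 - c0) * b := Nat.mul_le_mul_right _ hcard
    have step2 : (c1 + 1 - c0) * b = (c1 - c0) * b + b := by
      rw [show c1 + 1 - c0 = (c1 - c0) + 1 by omega, Nat.add_mul, one_mul]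
    have step3 : (c1 - c0) * b = c1*b - c0*b := Nat.sub_mul _ _ _
    have hmul2 : c0*b ≤ c1*b := Nat.mul_le_mul_right _ hle
    have hub : c1*b < y + N := h1.2
    have hlb : y < c0*b + N := h0.1
    omega

private lemma step_lemma {m N b p : ℕ} (hb : 0 < b) (hbp : b * p = m) (hN : 0 < N)
    (Y : Finset ℕ) (hY : Y.card * (2*N - 2 + b) < m + b) :
    ∃ x, b ∣ x ∧ x ≤ m ∧ ∀ y ∈ Y, x + N ≤ y ∨ y + N ≤ x := by
  classical
  set G := (Finset.range (p+1)).filter (fun c => ∀ y ∈ Y, c*b + N ≤ y ∨ y + N ≤ c*b) with hG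
  set Bad := fun y => (Finset.range (p+1)).filter (fun c => ¬(c*b + N ≤ y ∨ y + N ≤ c*b)) with hBad
  have hsub : Finset.range (p+1) ⊆ G ∪ Y.biUnion Bad := by
    intro c hc
    by_cases hgood : ∀ y ∈ Y, c*b + N ≤ y ∨ y + N ≤ c*b
    · exact Finset.mem_union_left _ (Finset.mem_filter.2 ⟨hc, hgood⟩)
    · have hex : ∃ y ∈ Y, ¬(c*b + N ≤ y ∨ y + N ≤ c*b) := by
        push_neg at hgood ⊢
        exact hgood
      obtain ⟨y, hy, hbad⟩ := hex
      exact Finset.mem_union_right _ (Finset.mem_biUnion.2 ⟨y, hy, Finset.mem_filter.2 ⟨hc, hbad⟩⟩)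
  have hcards : p + 1 ≤ G.card + ∑ y ∈ Y, (Bad y).card := by
    calc p + 1 = (Finset.range (p+1)).card := by simp
      _ ≤ (G ∪ Y.biUnion Bad).card := Finset.card_le_card hsub
      _ ≤ G.card + (Y.biUnion Bad).card := Finset.card_union_le _ _
      _ ≤ G.card + ∑ y ∈ Y, (Bad y).card :=
          Nat.add_le_add_left Finset.card_biUnion_le _
  have hsum : (∑ y ∈ Y, (Bad y).card) * b ≤ Y.card * (2*N - 2 + b) := by
    rw [Finset.sum_mul]
    calc ∑ y ∈ Y, (Bad y).card * b ≤ ∑ _y ∈ Y, (2*N - 2 + b) :=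
          Finset.sum_le_sum (fun y _ => bad_card_bound hb)
      _ = Y.card * (2*N - 2 + b) := by rw [Finset.sum_const, smul_eq_mul]
  have hGpos : 0 < G.card := by
    by_contra hg
    push_neg at hg
    have hg0 : G.card = 0 := by omega
    have h2 : (p + 1) * b ≤ (G.card + ∑ y ∈ Y, (Bad y).card) * b := Nat.mul_le_mul_right _ hcards
    rw [hg0] at h2
    simp only [Nat.zero_add] at h2
    have hmb : (p+1)*b = m + b := by rw [← hbp]; ring
    omega
  obtain ⟨c, hcG⟩ := Finset.card_pos.1 hGpos
  have hc := Finset.mem_filter.1 hcG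
  refine ⟨c * b, Dvd.intro_left c rfl, ?_, ?_⟩
  · have hcp : c ≤ p := by have := Finset.mem_range.1 hc.1; omega
    calc c * b ≤ p * b := Nat.mul_le_mul_right _ hcp
      _ = m := by rw [← hbp]; ring
  · exact hc.2

private lemma aux_pi {p : ℕ} (K v : ℕ) (hpK : p + 1 ≤ K)
    (hv : ((Finset.range K).filter Nat.Prime).card = v) :
    ((Finset.range (p+1)).filter Nat.Prime).card ≤ v := by
  rw [← hv]
  exact Finset.card_le_card (Finset.filter_subset_filter _ (Finset.range_subset_range.2 hpK))

private lemma prime_rank_bound {p i : ℕ} (hi : 1 ≤ i) (hi17 : i ≤ 17)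
    (hcard : i ≤ ((Finset.range (p+1)).filter Nat.Prime).card) :
    51*i + 2*(i+1)*p ≤ 51*p := by
  interval_cases i
  · by_contra h
    have := aux_pi (p := p) 2 0 (by omega) (by decide); omega
  · by_contra h
    have := aux_pi (p := p) 3 1 (by omega) (by decide); omega
  · by_contra h
    have := aux_pi (p := p) 4 2 (by omega) (by decide); omega
  · by_contra h
    have := aux_pi (p := p) 5 2 (by omega) (by decide); omega
  · by_contra h
    have := aux_pi (p := p) 7 3 (by omega) (by decide); omega
  · by_contra h
    have := aux_pi (p := p) 9 4 (by omega) (by decide); omega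
  · by_contra h
    have := aux_pi (p := p) 11 4 (by omega) (by decide); omega
  · by_contra h
    have := aux_pi (p := p) 13 5 (by omega) (by decide); omega
  · by_contra h
    have := aux_pi (p := p) 15 6 (by omega) (by decide); omega
  · by_contra h
    have := aux_pi (p := p) 18 7 (by omega) (by decide); omega
  · by_contra h
    have := aux_pi (p := p) 21 8 (by omega) (by decide); omega
  · by_contra h
    have := aux_pi (p := p) 25 9 (by omega) (by decide); omega
  · by_contra h
    have := aux_pi (p := p) 29 9 (by omega) (by decide); omega
  · by_contra h
    have := aux_pi (p := p) 34 11 (by omega) (by decide); omega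
  · by_contra h
    have := aux_pi (p := p) 41 12 (by omega) (by decide); omega
  · by_contra h
    have := aux_pi (p := p) 48 15 (by omega) (by decide); omega
  · by_contra h
    have := aux_pi (p := p) 58 16 (by omega) (by decide); omega

private lemma pow_ge {i : ℕ} (h : 18 ≤ i) : 64*(i+1)^2 ≤ 2^i := by
  induction i, h using Nat.le_induction with
  | base => norm_num
  | succ n hn ih =>
      have h2 : 2^(n+1) = 2 * 2^n := by ring
      have h3 : 64*(n+1+1)^2 ≤ 2 * (64*(n+1)^2) := by nlinarith
      omega

private lemma points_exist {N m : ℕ} (hN : 1 ≤ N) (hm51 : 51*N ≤ m) (hmN2 : N^2 ≤ m) :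
    ∀ n : ℕ, ∀ S : Finset ℕ, S.card ≤ n → S ⊆ m.primeFactors →
    ∃ T : Finset ℕ, T.card ≤ S.card ∧
      (∀ x ∈ T, N ≤ x ∧ x + N ≤ m) ∧
      (∀ x ∈ T, ∀ y ∈ T, x ≠ y → x + N ≤ y ∨ y + N ≤ x) ∧
      (∀ p ∈ S, ∃ x ∈ T, (m / p) ∣ x) := by
  have hm0 : 0 < m := by omega
  intro n
  induction n with
  | zero =>
      intro S hScard _
      have hSe : S = ∅ := Finset.card_eq_zero.1 (Nat.le_zero.1 hScard)
      subst hSe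
      exact ⟨∅, by simp, by simp, by simp, by simp⟩
  | succ n ih =>
      intro S hScard hS
      rcases Nat.lt_or_ge S.card (n+1) with h | hge
      · exact ih S (by omega) hS
      have hcard : S.card = n + 1 := by omega
      have hne : S.Nonempty := Finset.card_pos.1 (by omega)
      set p := S.max' hne with hp
      have hpS : p ∈ S := S.max'_mem hne
      have hpf : p ∈ m.primeFactors := hS hpS
      have hpprime : p.Prime := Nat.prime_of_mem_primeFactors hpf
      have hpdvd : p ∣ m := Nat.dvd_of_mem_primeFactors hpf
      set b := m / p with hbdef
      have hbp : b * p = m := Nat.div_mul_cancel hpdvd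
      have hbpos : 0 < b := by
        rcases Nat.eq_zero_or_pos b with h0 | hpos
        · rw [h0, Nat.zero_mul] at hbp; omega
        · exact hpos
      set S' := S.erase p with hS'def
      have hS'card : S'.card = n := by
        rw [hS'def, Finset.card_erase_of_mem hpS, hcard]
        omega
      obtain ⟨T', hT'card, hT'bounds, hT'sep, hT'cov⟩ :=
        ih S' (by omega) (fun q hq => hS (Finset.erase_subset _ _ hq))
      set i := S.card with hidef
      have hSsub : S ⊆ (Finset.range (p+1)).filter Nat.Prime := by
        intro q hq
        refine Finset.mem_filter.2 ⟨Finset.mem_range.2 ?_, Nat.prime_of_mem_primeFactors (hS hq)⟩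
        have := S.le_max' q hq
        omega
      have hpi : i ≤ ((Finset.range (p+1)).filter Nat.Prime).card := by
        rw [hidef]; exact Finset.card_le_card hSsub
      have hkey : (i+1) * (2*N + b) ≤ m + b := by
        by_cases hi17 : i ≤ 17
        · have hi1 : 1 ≤ i := by omega
          have H := prime_rank_bound hi1 hi17 hpi
          have hppos : 0 < p := hpprime.pos
          have main : (51*p) * ((i+1)*(2*N+b)) ≤ (51*p) * (m + b) := by
            calc (51*p) * ((i+1)*(2*N+b))
                = 2*(i+1)*p*(51*N) + 51*(i+1)*(b*p) := by ring
              _ ≤ 2*(i+1)*p*m + 51*(i+1)*m := by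
                  rw [hbp]
                  exact Nat.add_le_add_right (Nat.mul_le_mul_left _ hm51) _
              _ = (2*(i+1)*p + 51*i + 51)*m := by ring
              _ ≤ (51*p + 51)*m := Nat.mul_le_mul_right _ (by omega)
              _ = (51*p) * (m + b) := by rw [← hbp]; ring
          exact Nat.le_of_mul_le_mul_left main (by omega)
        · have hi18 : 18 ≤ i := by omega
          have hdvd : (∏ q ∈ S, q) ∣ m :=
            (Finset.prod_dvd_prod_of_subset S m.primeFactors id hS).trans
              (Nat.prod_primeFactors_dvd m)
          have h2i : 2^i ≤ ∏ q ∈ S, q := by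
            rw [hidef]
            exact Finset.pow_card_le_prod S id 2
              (fun q hq => (Nat.prime_of_mem_primeFactors (hS hq)).two_le)
          have h2m : 2^i ≤ m := le_trans h2i (Nat.le_of_dvd hm0 hdvd)
          have h64 : 64*(i+1)^2 ≤ m := le_trans (pow_ge hi18) h2m
          have h8 : 8*(i+1)*N ≤ m := by
            by_contra hc
            push_neg at hc
            have hmm : 64*(i+1)^2 * N^2 ≤ m * m := Nat.mul_le_mul h64 hmN2
            nlinarith
          have hpbig : 2*i ≤ p + 2 := by
            have hmaps : ∀ q ∈ S.erase 2, q / 2 ∈ Finset.Icc 1 (p/2) := by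
              intro q hq
              have hqS : q ∈ S := Finset.mem_of_mem_erase hq
              have hq2 : q ≠ 2 := Finset.ne_of_mem_erase hq
              have hqprime : q.Prime := Nat.prime_of_mem_primeFactors (hS hqS)
              have hq3 : 3 ≤ q := by have := hqprime.two_le; omega
              have hqp : q ≤ p := S.le_max' q hqS
              exact Finset.mem_Icc.2 ⟨by omega, Nat.div_le_div_right hqp⟩
            have hinj : ∀ q ∈ S.erase 2, ∀ r ∈ S.erase 2, q / 2 = r / 2 → q = r := by
              intro q hq r hr hqr
              have hqS : q ∈ S := Finset.mem_of_mem_erase hq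
              have hrS : r ∈ S := Finset.mem_of_mem_erase hr
              have hqo : q % 2 = 1 := Nat.odd_iff.1
                ((Nat.prime_of_mem_primeFactors (hS hqS)).odd_of_ne_two (Finset.ne_of_mem_erase hq))
              have hro : r % 2 = 1 := Nat.odd_iff.1
                ((Nat.prime_of_mem_primeFactors (hS hrS)).odd_of_ne_two (Finset.ne_of_mem_erase hr))
              omega
            have hcardle : (S.erase 2).card ≤ (Finset.Icc 1 (p/2)).card :=
              Finset.card_le_card_of_injOn _ hmaps hinj
            have hcarderase : S.card - 1 ≤ (S.erase 2).card := Finset.pred_card_le_card_erase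
            have hIcc : (Finset.Icc 1 (p/2)).card = p/2 := by
              rw [Nat.card_Icc]
              omega
            omega
          have h4i : 4*i ≤ 3*p := by omega
          have main : (4*p) * ((i+1)*(2*N) + i*b) ≤ (4*p) * m := by
            calc (4*p) * ((i+1)*(2*N) + i*b)
                = (8*(i+1)*N)*p + 4*i*(b*p) := by ring
              _ ≤ m*p + 4*i*m := by
                  rw [hbp]
                  exact Nat.add_le_add_right (Nat.mul_le_mul_right _ h8) _
              _ = (p + 4*i)*m := by ring
              _ ≤ (4*p)*m := Nat.mul_le_mul_right _ (by omega)
          have main2 : (i+1)*(2*N) + i*b ≤ m :=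
            Nat.le_of_mul_le_mul_left main (by have := hpprime.pos; omega)
          have expand : (i+1)*(2*N+b) = ((i+1)*(2*N) + i*b) + b := by ring
          omega
      set Y : Finset ℕ := insert 0 (insert m T') with hYdef
      have hYcard : Y.card ≤ i + 1 := by
        rw [hYdef]
        have h1 := Finset.card_insert_le 0 (insert m T')
        have h2 := Finset.card_insert_le m T'
        omega
      have hYlt : Y.card * (2*N - 2 + b) < m + b := by
        calc Y.card * (2*N-2+b) ≤ (i+1) * (2*N-2+b) := Nat.mul_le_mul_right _ hYcard
          _ < (i+1) * (2*N+b) := by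
              apply (Nat.mul_lt_mul_left (by omega : 0 < i+1)).2
              omega
          _ ≤ m + b := hkey
      obtain ⟨x, hxdvd, hxle, hxsep⟩ := step_lemma hbpos hbp (by omega) Y hYlt
      have hx0 : N ≤ x := by
        have := hxsep 0 (by simp [hYdef])
        omega
      have hxm : x + N ≤ m := by
        have := hxsep m (by simp [hYdef])
        omega
      refine ⟨insert x T', ?_, ?_, ?_, ?_⟩
      · have := Finset.card_insert_le x T'
        omega
      · intro z hz
        rcases Finset.mem_insert.1 hz with rfl | hz'
        · exact ⟨hx0, hxm⟩
        · exact hT'bounds z hz'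
      · intro z hz w hw hzw
        rcases Finset.mem_insert.1 hz with rfl | hz' <;> rcases Finset.mem_insert.1 hw with rfl | hw'
        · omega
        · exact hxsep w (by simp [hYdef, hw'])
        · rcases hxsep z (by simp [hYdef, hz']) with hh | hh
          · right; exact hh
          · left; exact hh
        · exact hT'sep z hz' w hw' hzw
      · intro q hq
        by_cases hqp : q = p
        · subst hqp
          exact ⟨x, Finset.mem_insert_self _ _, hxdvd⟩
        · obtain ⟨x', hx', hd⟩ := hT'cov q (Finset.mem_erase.2 ⟨hqp, hq⟩)
          exact ⟨x', Finset.mem_insert_of_mem hx', hd⟩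

private def mkList (m : ℕ) : ℕ → List ℕ → List ℕ
  | prev, [] => [m - prev]
  | prev, x :: xs => (x - prev) :: mkList m x xs

private lemma mkList_length (m : ℕ) : ∀ (prev : ℕ) (xs : List ℕ),
    (mkList m prev xs).length = xs.length + 1 := by
  intro prev xs
  induction xs generalizing prev with
  | nil => rfl
  | cons x xs ih => simp [mkList, ih]

private lemma mkList_sum (m N : ℕ) : ∀ (prev : ℕ) (xs : List ℕ),
    List.Chain (fun a c => a + N ≤ c) prev (xs ++ [m]) →
    (mkList m prev xs).sum + prev = m := by
  intro prev xs
  induction xs generalizing prev with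
  | nil =>
      intro h
      have h1 := (List.chain_cons.1 h).1
      simp [mkList]
      omega
  | cons x xs ih =>
      intro h
      obtain ⟨h1, h2⟩ := List.chain_cons.1 h
      have h3 := ih x h2
      simp only [mkList, List.sum_cons]
      omega

private lemma mkList_mem (m N : ℕ) : ∀ (prev : ℕ) (xs : List ℕ),
    List.Chain (fun a c => a + N ≤ c) prev (xs ++ [m]) →
    ∀ v ∈ mkList m prev xs, N ≤ v := by
  intro prev xs
  induction xs generalizing prev with
  | nil =>
      intro h v hv
      have h1 := (List.chain_cons.1 h).1
      simp [mkList] at hv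
      omega
  | cons x xs ih =>
      intro h v hv
      obtain ⟨h1, h2⟩ := List.chain_cons.1 h
      simp only [mkList, List.mem_cons] at hv
      rcases hv with rfl | hv
      · omega
      · exact ih x h2 v hv

private lemma mkList_take (m N : ℕ) : ∀ (prev : ℕ) (xs : List ℕ),
    List.Chain (fun a c => a + N ≤ c) prev (xs ++ [m]) →
    ∀ v ∈ xs, ∃ j, 1 ≤ j ∧ j ≤ xs.length ∧ ((mkList m prev xs).take j).sum + prev = v := by
  intro prev xs
  induction xs generalizing prev with
  | nil => intro _ v hv; simp at hv
  | cons x xs ih =>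
      intro h v hv
      obtain ⟨h1, h2⟩ := List.chain_cons.1 h
      rcases List.mem_cons.1 hv with rfl | hv'
      · refine ⟨1, le_refl _, by simp, ?_⟩
        simp [mkList]
        omega
      · obtain ⟨j, hj1, hj2, hj3⟩ := ih x h2 v hv'
        refine ⟨j + 1, by omega, by simp; omega, ?_⟩
        simp only [mkList, List.take_succ_cons, List.sum_cons]
        omega

private lemma chain_of_points (N m : ℕ) : ∀ (xs : List ℕ) (prev : ℕ),
    List.Pairwise (fun a c => a + N ≤ c) xs →
    (∀ x ∈ xs, x + N ≤ m) → (∀ x ∈ xs, prev + N ≤ x) → prev + N ≤ m →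
    List.Chain (fun a c => a + N ≤ c) prev (xs ++ [m]) := by
  intro xs
  induction xs with
  | nil => intro prev _ _ _ hm; exact List.chain_cons.2 ⟨hm, List.Chain.nil⟩
  | cons x xs ih =>
      intro prev hpw hxm hprev hm
      refine List.chain_cons.2 ⟨hprev x (by simp), ?_⟩
      exact ih x (List.pairwise_cons.1 hpw).2
        (fun z hz => hxm z (by simp [hz]))
        (fun z hz => (List.pairwise_cons.1 hpw).1 z hz)
        (hxm x (by simp))

/-- Arithmetical lemma: for `N ≥ 1` and `m ≥ max(N², 51N)` (any `m ≥ 1` if `N = 1`),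
`m` can be written as a sum `n₁ + ⋯ + n_k` with all `nᵢ ≥ N` such that every proper
divisor of `m` divides some partial sum `n₁ + ⋯ + nᵢ` with `1 ≤ i ≤ k - 1`. -/
theorem stmt_1 (N m : ℕ) (hN : 0 < N)
    (hm : m ≥ if N = 1 then 1 else max (N ^ 2) (51 * N)) :
    ∃ L : List ℕ, L.sum = m ∧ (∀ n ∈ L, N ≤ n) ∧
      ∀ d : ℕ, d ∣ m → d ≠ m →
        ∃ i, 1 ≤ i ∧ i ≤ L.length - 1 ∧ d ∣ (L.take i).sum := by
  by_cases h1 : N = 1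
  · rw [if_pos h1] at hm
    subst h1
    refine ⟨List.replicate m 1, by simp, by simp, ?_⟩
    intro d hd hdm
    have hm0 : 0 < m := hm
    have hd0 : 0 < d := Nat.pos_of_dvd_of_pos hd hm0
    have hdlt : d < m := lt_of_le_of_ne (Nat.le_of_dvd hm0 hd) hdm
    refine ⟨d, hd0, by simp; omega, ?_⟩
    have htake : (List.replicate m 1).take d = List.replicate d 1 := by
      rw [List.take_replicate]
      congr 1
      omega
    rw [htake]
    simp
  · rw [if_neg h1] at hm
    have hm51 : 51*N ≤ m := le_trans (le_max_right _ _) hm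
    have hmN2 : N^2 ≤ m := le_trans (le_max_left _ _) hm
    have hN2 : 2 ≤ N := by omega
    have hm0 : 0 < m := by omega
    obtain ⟨T, hTcard, hTbounds, hTsep, hTcov⟩ :=
      points_exist (by omega) hm51 hmN2 m.primeFactors.card m.primeFactors (le_refl _)
        (Finset.Subset.refl _)
    set xs := T.sort (·≤·) with hxs
    have hmem : ∀ x, x ∈ xs ↔ x ∈ T := fun x => Finset.mem_sort _
    have hpw : List.Pairwise (fun a c => a + N ≤ c) xs := by
      have hsorted : List.Pairwise (·≤·) xs := Finset.pairwise_sort _ _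
      have hnodup : List.Pairwise (· ≠ ·) xs := Finset.sort_nodup _ _
      have hand := List.Pairwise.and hsorted hnodup
      refine hand.imp_of_mem ?_
      intro a c ha hc hac
      rcases hTsep a ((hmem a).1 ha) c ((hmem c).1 hc) hac.2 with hh | hh
      · exact hh
      · exfalso; have := hac.1; omega
    have hchain : List.Chain (fun a c => a + N ≤ c) 0 (xs ++ [m]) := by
      apply chain_of_points N m xs 0 hpw
      · exact fun x hx => (hTbounds x ((hmem x).1 hx)).2
      · intro x hx
        have := (hTbounds x ((hmem x).1 hx)).1
        omega
      · omega
    refine ⟨mkList m 0 xs, ?_, ?_, ?_⟩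
    · have := mkList_sum m N 0 xs hchain
      omega
    · exact fun v hv => mkList_mem m N 0 xs hchain v hv
    · intro d hd hdm
      have hd0 : 0 < d := Nat.pos_of_dvd_of_pos hd hm0
      have hmd : d * (m/d) = m := Nat.mul_div_cancel' hd
      have hmd1 : m / d ≠ 1 := by
        intro hh
        rw [hh, Nat.mul_one] at hmd
        exact hdm hmd
      set q := (m/d).minFac with hqdef
      have hqprime : q.Prime := Nat.minFac_prime hmd1
      obtain ⟨k, hk⟩ := Nat.minFac_dvd (m/d)
      have hmeq : m = q * (d * k) := by rw [← hmd, hk]; ring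
      have hqm : q ∣ m := ⟨d*k, hmeq⟩
      have hqpf : q ∈ m.primeFactors := Nat.mem_primeFactors.2 ⟨hqprime, hqm, by omega⟩
      obtain ⟨x, hxT, hxdvd⟩ := hTcov q hqpf
      have hmq : m / q = d * k := by
        rw [hmeq, Nat.mul_div_cancel_left _ hqprime.pos]
      have hdx : d ∣ x := (by rw [hmq]; exact Dvd.intro k rfl : d ∣ m / q).trans hxdvd
      obtain ⟨j, hj1, hj2, hj3⟩ := mkList_take m N 0 xs hchain x ((hmem x).2 hxT)
      refine ⟨j, hj1, ?_, ?_⟩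
      · rw [mkList_length]
        omega
      · have hxeq : ((mkList m 0 xs).take j).sum = x := by omega
        rw [hxeq]
        exact hdx
end

section
/- Let N be a positive integer and α < β real numbers. Then there exists a positive integer N₀ such that for all integers n ≥ N₀ there exist coprime integers p, q with q > 0, p/q ∈ [α, β], q ≥ N, and q dividing n. -/
/-!
Every `n > M !` has a prime-power divisor `q = r ^ k > M`. Once `M ≥ 2 / (β - α)`, the interval
`[α q, β q]` contains two consecutive integers, and one of them is prime to `r`, hence to `q`.
-/

open Nat

/-- Every prime power `≤ M` divides `M !`, which `n > M !` does not. -/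
theorem Nat.exists_prime_pow_dvd_gt_of_factorial_lt {M n : ℕ} (h : M ! < n) :
    ∃ r k : ℕ, r.Prime ∧ M < r ^ k ∧ r ^ k ∣ n := by
  by_contra! hsmall
  have hdvd : n ∣ M ! := (Nat.dvd_iff_prime_pow_dvd_dvd M ! n).mpr fun r k hr hrk =>
    Nat.dvd_factorial (pow_pos hr.pos k) (not_lt.mp fun hlt => hsmall r k hr hlt hrk)
  exact (Nat.le_of_dvd (factorial_pos M) hdvd).not_gt h

theorem Int.exists_mem_Icc_not_dvd {a b : ℝ} (hab : a + 2 ≤ b) {r : ℤ} (hr : ¬ IsUnit r) :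
    ∃ p : ℤ, a ≤ p ∧ (p : ℝ) ≤ b ∧ ¬ r ∣ p := by
  have hle : a ≤ ⌈a⌉ := Int.le_ceil a
  have hlt : (⌈a⌉ : ℝ) < a + 1 := Int.ceil_lt_add_one a
  by_cases hd : r ∣ ⌈a⌉
  · refine ⟨⌈a⌉ + 1, by push_cast; linarith, by push_cast; linarith, fun hd' => hr ?_⟩
    exact isUnit_of_dvd_one ((dvd_add_right hd).mp hd')
  · exact ⟨⌈a⌉, hle, by linarith, hd⟩

theorem Int.gcd_eq_one_of_not_dvd_pow {r : ℕ} (hr : r.Prime) {p : ℤ} (hp : ¬ (r : ℤ) ∣ p)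
    (k : ℕ) : Int.gcd p ((r ^ k : ℕ) : ℤ) = 1 := by
  rw [← Int.isCoprime_iff_gcd_eq_one, Nat.cast_pow]
  exact (((Nat.prime_iff_prime_int.mp hr).coprime_iff_not_dvd).mpr hp).symm.pow_right

theorem stmt_2_general (N : ℕ) (α β : ℝ) (hαβ : α < β) :
    ∃ N₀ : ℕ, 0 < N₀ ∧ ∀ n : ℕ, N₀ ≤ n →
      ∃ (p : ℤ) (q : ℕ), 0 < q ∧ Int.gcd p (q : ℤ) = 1 ∧
        α ≤ (p : ℝ) / (q : ℝ) ∧ (p : ℝ) / (q : ℝ) ≤ β ∧ N ≤ q ∧ (q : ℤ) ∣ (n : ℤ) := by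
  have hwidth : 0 < β - α := sub_pos.mpr hαβ
  set M := max N ⌈2 / (β - α)⌉₊
  refine ⟨M ! + 1, succ_pos _, fun n hn => ?_⟩
  obtain ⟨r, k, hr, hMq, hqn⟩ := Nat.exists_prime_pow_dvd_gt_of_factorial_lt (M := M) hn
  have hq : (0 : ℝ) < (r ^ k : ℕ) := by exact_mod_cast pow_pos hr.pos k
  have hlong : α * (r ^ k : ℕ) + 2 ≤ β * (r ^ k : ℕ) := by
    have : 2 / (β - α) ≤ ((r ^ k : ℕ) : ℝ) :=
      (Nat.le_ceil _).trans (by exact_mod_cast (le_max_right _ _).trans hMq.le)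
    rw [div_le_iff₀ hwidth] at this
    linarith
  obtain ⟨p, hαp, hpβ, hrp⟩ := Int.exists_mem_Icc_not_dvd hlong (r := r)
    (by rw [Int.isUnit_iff_natAbs_eq, Int.natAbs_natCast]; exact hr.ne_one)
  exact ⟨p, r ^ k, pow_pos hr.pos k, Int.gcd_eq_one_of_not_dvd_pow hr hrp k,
    (le_div_iff₀ hq).mpr hαp, (div_le_iff₀ hq).mpr hpβ, (le_max_left _ _).trans hMq.le,
    Int.natCast_dvd_natCast.mpr hqn⟩

/-- For every positive integer `N` and reals `α < β`, there is `N₀` such that every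
`n ≥ N₀` has a divisor `q ≥ N` which is the denominator of a reduced fraction
`p/q ∈ [α, β]`. -/
theorem stmt_2 (N : ℕ) (hN : 0 < N) (α β : ℝ) (hαβ : α < β) :
    ∃ N₀ : ℕ, 0 < N₀ ∧ ∀ n : ℕ, N₀ ≤ n →
      ∃ (p : ℤ) (q : ℕ), 0 < q ∧ Int.gcd p (q : ℤ) = 1 ∧
        α ≤ (p : ℝ) / (q : ℝ) ∧ (p : ℝ) / (q : ℝ) ≤ β ∧ N ≤ q ∧ (q : ℤ) ∣ (n : ℤ) :=
  stmt_2_general N α β hαβ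
end

section
/- Fix coprime integers a, b with b > 0 and α ≤ a/b. Let M be a positive integer with a/b + 1/M ≤ β. Then for every integer n ≥ max(M, b·N) there exists r ∈ {1, …, b} such that b divides n·a + r, and writing (n·a+r)/(b·n) = p/q in lowest terms one has p/q ∈ [α, β], q ≥ N, and q divides n. -/
/-!
Choose `r ∈ [1, b]` with `n a + r = b m`. Then `(n a + r)/(b n) = m/n = a/b + r/(b n)` lies in
`[a/b, a/b + 1/n] ⊆ [α, β]` as `n ≥ M`. Reducing `m/n` by `g = gcd(m, n)` gives a denominator `q = n/g`
dividing `n`, and since `g ∣ b m - n a = r` we have `g ≤ b`, hence `q ≥ n/b ≥ N`.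
-/

theorem Int.exists_add_mem_Icc_dvd (x : ℤ) {b : ℤ} (hb : 0 < b) :
    ∃ r, 1 ≤ r ∧ r ≤ b ∧ b ∣ x + r := by
  refine ⟨b - x % b, ?_, ?_, ?_⟩
  · linarith [Int.emod_lt_of_pos x hb]
  · linarith [Int.emod_nonneg x hb.ne']
  · have hx : b ∣ x - x % b := Int.dvd_self_sub_of_emod_eq rfl
    rw [show x + (b - x % b) = x - x % b + b by ring]
    exact hx.add dvd_rfl

theorem Int.exists_lowest_terms {K : Type*} [Field K] [CharZero K] (m : ℤ) {n : ℤ} (hn : 0 < n) :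
    ∃ (p : ℤ) (q : ℕ), 0 < q ∧ Int.gcd p q = 1 ∧ (p : K) / q = m / n ∧
      (q : ℤ) * Int.gcd m n = n := by
  have hg : 0 < Int.gcd m n := Int.gcd_pos_of_ne_zero_right m hn.ne'
  obtain ⟨p, q, hpq, hmp, hnq⟩ := Int.exists_gcd_one hg
  have hq : 0 < q := pos_of_mul_pos_left (hnq ▸ hn) (Int.natCast_nonneg _)
  lift q to ℕ using hq.le
  refine ⟨p, q, by exact_mod_cast hq, hpq, ?_, hnq.symm⟩
  have hmK : (m : K) = p * (Int.gcd m n : ℕ) := by exact_mod_cast hmp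
  have hnK : (n : K) = q * (Int.gcd m n : ℕ) := by exact_mod_cast hnq
  rw [hmK, hnK, mul_div_mul_right _ _ (by exact_mod_cast hg.ne')]

theorem Int.gcd_le_of_add_eq_mul {a b m n r : ℤ} (h : n * a + r = b * m) (hr : 0 < r) :
    (Int.gcd m n : ℤ) ≤ r := by
  have hgr : (Int.gcd m n : ℤ) ∣ b * m - n * a :=
    ((Int.gcd_dvd_left m n).mul_left b).sub ((Int.gcd_dvd_right m n).mul_right a)
  exact Int.le_of_dvd hr (by rwa [← h, add_sub_cancel_left] at hgr)

theorem div_le_div_and_le_div_add_one_div {K : Type*} [Field K] [LinearOrder K]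
    [IsStrictOrderedRing K]
    {a b m n r M : K} (hb : 0 < b) (hM : 0 < M) (hMn : M ≤ n) (hr : 0 ≤ r) (hrb : r ≤ b)
    (h : n * a + r = b * m) : a / b ≤ m / n ∧ m / n ≤ a / b + 1 / M := by
  have hn : 0 < n := hM.trans_le hMn
  have hmn : m / n = a / b + r / (b * n) := by
    field_simp
    linear_combination -h
  have hrn : r / (b * n) ≤ 1 / M := by
    rw [div_le_div_iff₀ (by positivity) hM]
    nlinarith
  rw [hmn]
  exact ⟨le_add_of_nonneg_right (div_nonneg hr (by positivity)), by linarith⟩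

theorem stmt_3_general (N : ℕ) (α β : ℝ) (a b : ℤ) (hb : 0 < b)
    (hα : α ≤ (a : ℝ) / (b : ℝ)) (M : ℤ) (hM : 0 < M)
    (hβ : (a : ℝ) / (b : ℝ) + 1 / (M : ℝ) ≤ β)
    (n : ℤ) (hn : max M (b * (N : ℤ)) ≤ n) :
    ∃ r : ℤ, 1 ≤ r ∧ r ≤ b ∧ b ∣ n * a + r ∧
      ∃ (p : ℤ) (q : ℕ), 0 < q ∧ Int.gcd p (q : ℤ) = 1 ∧
        (p : ℝ) / (q : ℝ) = ((n * a + r : ℤ) : ℝ) / ((b * n : ℤ) : ℝ) ∧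
        α ≤ (p : ℝ) / (q : ℝ) ∧ (p : ℝ) / (q : ℝ) ≤ β ∧ N ≤ q ∧ (q : ℤ) ∣ n := by
  obtain ⟨hMn, hbN⟩ := max_le_iff.mp hn
  have hn0 : 0 < n := hM.trans_le hMn
  obtain ⟨r, hr1, hrb, m, hm⟩ := Int.exists_add_mem_Icc_dvd (n * a) hb
  obtain ⟨p, q, hq, hpq, hval, hqg⟩ := Int.exists_lowest_terms (K := ℝ) m hn0
  have hg : (Int.gcd m n : ℤ) ≤ b := (Int.gcd_le_of_add_eq_mul hm (by omega)).trans hrb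
  have hmR : (n : ℝ) * a + r = b * m := by exact_mod_cast hm
  have hfrac : ((n * a + r : ℤ) : ℝ) / ((b * n : ℤ) : ℝ) = m / n := by
    push_cast
    rw [hmR, mul_div_mul_left _ _ (by positivity)]
  obtain ⟨hlo, hhi⟩ := div_le_div_and_le_div_add_one_div (M := (M : ℝ)) (by exact_mod_cast hb)
    (by exact_mod_cast hM) (by exact_mod_cast hMn) (by exact_mod_cast (by omega : (0 : ℤ) ≤ r))
    (by exact_mod_cast hrb) hmR
  refine ⟨r, hr1, hrb, ⟨m, hm⟩, p, q, hq, hpq, hfrac ▸ hval, hval ▸ hα.trans hlo,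
    hval ▸ hhi.trans hβ, ?_, ⟨_, hqg.symm⟩⟩
  have hg0 : 0 < (Int.gcd m n : ℤ) := by exact_mod_cast Int.gcd_pos_of_ne_zero_right m hn0.ne'
  have : (N : ℤ) ≤ q := by nlinarith
  exact_mod_cast this

/-- Fix coprime `a, b` with `b > 0` and `α ≤ a/b`, and a positive integer `M` with
`a/b + 1/M ≤ β`. For every integer `n ≥ max(M, b·N)` there exists `r ∈ {1,…,b}` with
`b ∣ n·a + r`, and writing `(n·a+r)/(b·n) = p/q` in lowest terms, `p/q ∈ [α, β]`,
`q ≥ N` and `q ∣ n`. -/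
theorem stmt_3 (N : ℕ) (hN : 0 < N) (α β : ℝ) (a b : ℤ) (hb : 0 < b)
    (hab : Int.gcd a b = 1) (hα : α ≤ (a : ℝ) / (b : ℝ)) (M : ℤ) (hM : 0 < M)
    (hβ : (a : ℝ) / (b : ℝ) + 1 / (M : ℝ) ≤ β)
    (n : ℤ) (hn : max M (b * (N : ℤ)) ≤ n) :
    ∃ r : ℤ, 1 ≤ r ∧ r ≤ b ∧ b ∣ n * a + r ∧
      ∃ (p : ℤ) (q : ℕ), 0 < q ∧ Int.gcd p (q : ℤ) = 1 ∧
        (p : ℝ) / (q : ℝ) = ((n * a + r : ℤ) : ℝ) / ((b * n : ℤ) : ℝ) ∧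
        α ≤ (p : ℝ) / (q : ℝ) ∧ (p : ℝ) / (q : ℝ) ≤ β ∧ N ≤ q ∧ (q : ℤ) ∣ n :=
  stmt_3_general N α β a b hb hα M hM hβ n hn
end

section
/- Let F : ℝ → ℝ be continuous and let I, J be compact non-degenerate intervals such that I positively F-covers J. Then for any a < b in J there exist x₀ ≤ y₀ in I with F(x₀) = a, F(y₀) = b, and F(t) ∈ (a,b) for all t ∈ (x₀, y₀). -/
/-!
Let `y₀` be the first point of `[x, y]` where `F = b`, and `x₀` the last point of `[x, y₀]` where
`F = a`; both exist by the intermediate value theorem and compactness. Between them `F` can take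
neither the value `b` (by the choice of `y₀`) nor the value `a` (by the choice of `x₀`), so by the
intermediate value theorem again it stays strictly between `a` and `b`.
-/

open Set OrderDual

namespace ContinuousOn

variable {α δ : Type*} [ConditionallyCompleteLinearOrder α] [TopologicalSpace α] [OrderTopology α]
  [DenselyOrdered α] [LinearOrder δ] [TopologicalSpace δ] [OrderClosedTopology δ]
  {F : α → δ} {x y : α} {b : δ}

theorem exists_first_eq_of_mem_Icc (hF : ContinuousOn F (Icc x y)) (hxy : x ≤ y)
    (hb : b ∈ Icc (F x) (F y)) : ∃ y₀ ∈ Icc x y, F y₀ = b ∧ ∀ t ∈ Ico x y₀, F t < b := by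
  have hS : IsCompact (Icc x y ∩ F ⁻¹' {b}) :=
    isCompact_Icc.of_isClosed_subset (hF.preimage_isClosed_of_isClosed isClosed_Icc
      isClosed_singleton) inter_subset_left
  obtain ⟨y₀, ⟨hy₀, hFy₀⟩, hfirst⟩ := hS.exists_isLeast (intermediate_value_Icc hxy hF hb)
  refine ⟨y₀, hy₀, hFy₀, fun t ht => ?_⟩
  by_contra! hbt
  have hty : t ≤ y := ht.2.le.trans hy₀.2
  obtain ⟨s, hs, hFs⟩ := intermediate_value_Icc ht.1 (hF.mono (Icc_subset_Icc_right hty)) ⟨hb.1, hbt⟩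
  exact (hfirst ⟨⟨hs.1, hs.2.trans hty⟩, hFs⟩).not_gt (hs.2.trans_lt ht.2)

theorem exists_last_eq_of_mem_Icc (hF : ContinuousOn F (Icc x y)) (hxy : x ≤ y)
    (hb : b ∈ Icc (F x) (F y)) : ∃ x₀ ∈ Icc x y, F x₀ = b ∧ ∀ t ∈ Ioc x₀ y, b < F t := by
  -- the last crossing is the first one after reversing the orders of both `α` and `δ`
  have hF' : ContinuousOn (toDual ∘ F ∘ ofDual) (Icc (toDual y) (toDual x)) := by
    rw [Icc_toDual]
    exact continuous_toDual.comp_continuousOn (hF.comp continuous_ofDual.continuousOn fun _ => id)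
  obtain ⟨x₀, hx₀, hFx₀, hlast⟩ :=
    exists_first_eq_of_mem_Icc hF' (toDual_le_toDual.2 hxy) (b := toDual b) ⟨hb.2, hb.1⟩
  exact ⟨ofDual x₀, ⟨hx₀.2, hx₀.1⟩, hFx₀, fun t ht => hlast (toDual t) ⟨ht.2, ht.1⟩⟩

theorem exists_mapsTo_Ioo (hF : ContinuousOn F (Icc x y)) (hxy : x ≤ y) {a : δ} (ha : F x ≤ a)
    (hab : a < b) (hb : b ≤ F y) :
    ∃ x₀ ∈ Icc x y, ∃ y₀ ∈ Icc x y, x₀ ≤ y₀ ∧ F x₀ = a ∧ F y₀ = b ∧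
      MapsTo F (Ioo x₀ y₀) (Ioo a b) := by
  obtain ⟨y₀, hy₀, hFy₀, hlt⟩ := hF.exists_first_eq_of_mem_Icc hxy ⟨ha.trans hab.le, hb⟩
  obtain ⟨x₀, hx₀, hFx₀, hgt⟩ := (hF.mono (Icc_subset_Icc_right hy₀.2)).exists_last_eq_of_mem_Icc
    hy₀.1 ⟨ha, hFy₀ ▸ hab.le⟩
  exact ⟨x₀, ⟨hx₀.1, hx₀.2.trans hy₀.2⟩, y₀, hy₀, hx₀.2, hFx₀, hFy₀,
    fun t ht => ⟨hgt t ⟨ht.1, ht.2.le⟩, hlt t ⟨hx₀.1.trans ht.1.le, ht.2⟩⟩⟩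

end ContinuousOn

theorem stmt_9_general (F : ℝ → ℝ) (hF : Continuous F)
    (a₁ b₁ c d : ℝ)
    (x y : ℝ) (hx : x ∈ Set.Icc a₁ b₁) (hy : y ∈ Set.Icc a₁ b₁) (hxy : x ≤ y)
    (hFx : F x ≤ c) (hFy : d ≤ F y)
    (a b : ℝ) (ha : a ∈ Set.Icc c d) (hb : b ∈ Set.Icc c d) (hab : a < b) :
    ∃ x₀ ∈ Set.Icc a₁ b₁, ∃ y₀ ∈ Set.Icc a₁ b₁, x₀ ≤ y₀ ∧
      F x₀ = a ∧ F y₀ = b ∧ ∀ t ∈ Set.Ioo x₀ y₀, F t ∈ Set.Ioo a b := by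
  obtain ⟨x₀, hx₀, y₀, hy₀, hle, hFx₀, hFy₀, hmaps⟩ :=
    hF.continuousOn.exists_mapsTo_Ioo hxy (hFx.trans ha.1) hab (hb.2.trans hFy)
  have hI : Icc x y ⊆ Icc a₁ b₁ := Icc_subset_Icc hx.1 hy.2
  exact ⟨x₀, hI hx₀, y₀, hI hy₀, hle, hFx₀, hFy₀, hmaps⟩

/-- If `I` positively `F`-covers `J` and `a < b` are points of `J`, then there are
`x₀ ≤ y₀` in `I` with `F x₀ = a`, `F y₀ = b` and `F(t) ∈ (a,b)` for `t ∈ (x₀, y₀)`. -/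
theorem stmt_9 (F : ℝ → ℝ) (hF : Continuous F)
    (a₁ b₁ c d : ℝ) (hI : a₁ < b₁) (hJ : c < d)
    (x y : ℝ) (hx : x ∈ Set.Icc a₁ b₁) (hy : y ∈ Set.Icc a₁ b₁) (hxy : x ≤ y)
    (hFx : F x ≤ c) (hFy : d ≤ F y)
    (a b : ℝ) (ha : a ∈ Set.Icc c d) (hb : b ∈ Set.Icc c d) (hab : a < b) :
    ∃ x₀ ∈ Set.Icc a₁ b₁, ∃ y₀ ∈ Set.Icc a₁ b₁, x₀ ≤ y₀ ∧
      F x₀ = a ∧ F y₀ = b ∧ ∀ t ∈ Set.Ioo x₀ y₀, F t ∈ Set.Ioo a b :=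
  stmt_9_general F hF a₁ b₁ c d x y hx hy hxy hFx hFy a b ha hb hab
end

section
/- Let F : ℝ → ℝ be continuous of degree one and let I, J be disjoint compact non-degenerate intervals. Suppose that there exists t > 0 such that for every integer n ≥ t, each of I and J positively Fⁿ-covers both I and J. Then for every integer m ≥ max(⌈t⌉², 51⌈t⌉) (and m ≥ 1 when t ≤ 1), there exists x ∈ I with Fᵐ(x) = x and Fⁱ(x) ≠ x for all 1 ≤ i ≤ m−1. -/
/-- `I` positively `F`-covers `J`: there are `x ≤ y` in `I` with `F x ≤ min J` and
`F y ≥ max J`. -/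
def PosCovers (F : ℝ → ℝ) (I J : Set ℝ) : Prop :=
  ∃ x ∈ I, ∃ y ∈ I, x ≤ y ∧ F x ≤ sInf J ∧ sSup J ≤ F y

private lemma pullback {G : ℝ → ℝ} (hG : Continuous G) {x y c d : ℝ}
    (hxy : x ≤ y) (hcd : c ≤ d) (hx : G x ≤ c) (hy : d ≤ G y) :
    ∃ u v, x ≤ u ∧ u ≤ v ∧ v ≤ y ∧ G u = c ∧ G v = d ∧
      ∀ z ∈ Set.Icc u v, G z ∈ Set.Icc c d := by
  have hSne : (Set.Icc x y ∩ G ⁻¹' {d}).Nonempty := by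
    obtain ⟨w, hw, hwd⟩ := intermediate_value_Icc hxy hG.continuousOn
      (Set.mem_Icc.mpr ⟨le_trans hx hcd, hy⟩)
    exact ⟨w, hw, hwd⟩
  have hSc : IsClosed (Set.Icc x y ∩ G ⁻¹' {d}) :=
    isClosed_Icc.inter (isClosed_singleton.preimage hG)
  have hSbdd : BddBelow (Set.Icc x y ∩ G ⁻¹' {d}) := ⟨x, fun z hz => hz.1.1⟩
  obtain ⟨⟨hxv, hvy⟩, hGv'⟩ := hSc.csInf_mem hSne hSbdd
  set v := sInf (Set.Icc x y ∩ G ⁻¹' {d}) with hvdef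
  have hGv : G v = d := hGv'
  have hlt : ∀ z, x ≤ z → z < v → G z < d := by
    intro z hxz hzv
    rcases lt_or_ge (G z) d with h | h
    · exact h
    · exfalso
      obtain ⟨w, hw, hwd⟩ := intermediate_value_Icc hxz hG.continuousOn
        (Set.mem_Icc.mpr ⟨le_trans hx hcd, h⟩)
      have hwS : w ∈ Set.Icc x y ∩ G ⁻¹' {d} :=
        ⟨⟨hw.1, le_trans hw.2 (le_trans hzv.le hvy)⟩, hwd⟩
      have hvw := csInf_le hSbdd hwS
      rw [← hvdef] at hvw
      exact absurd (lt_of_le_of_lt (hvw.trans hw.2) hzv) (lt_irrefl _)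
  have hTne : (Set.Icc x v ∩ G ⁻¹' {c}).Nonempty := by
    obtain ⟨w, hw, hwc⟩ := intermediate_value_Icc hxv hG.continuousOn
      (Set.mem_Icc.mpr ⟨hx, by rw [hGv]; exact hcd⟩)
    exact ⟨w, hw, hwc⟩
  have hTc : IsClosed (Set.Icc x v ∩ G ⁻¹' {c}) :=
    isClosed_Icc.inter (isClosed_singleton.preimage hG)
  have hTbdd : BddAbove (Set.Icc x v ∩ G ⁻¹' {c}) := ⟨v, fun z hz => hz.1.2⟩
  obtain ⟨⟨hxu, huv⟩, hGu'⟩ := hTc.csSup_mem hTne hTbdd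
  set u := sSup (Set.Icc x v ∩ G ⁻¹' {c}) with hudef
  have hGu : G u = c := hGu'
  have hgt : ∀ z, z ≤ v → u < z → c < G z := by
    intro z hzv huz
    rcases lt_or_ge c (G z) with h | h
    · exact h
    · exfalso
      obtain ⟨w, hw, hwc⟩ := intermediate_value_Icc hzv hG.continuousOn
        (Set.mem_Icc.mpr ⟨h, by rw [hGv]; exact hcd⟩)
      have hwT : w ∈ Set.Icc x v ∩ G ⁻¹' {c} :=
        ⟨⟨le_trans (le_trans hxu huz.le) hw.1, hw.2⟩, hwc⟩
      have huw := le_csSup hTbdd hwT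
      rw [← hudef] at huw
      exact absurd (lt_of_lt_of_le (lt_of_lt_of_le huz hw.1) huw) (lt_irrefl _)
  refine ⟨u, v, hxu, huv, hvy, hGu, hGv, ?_⟩
  intro z hz
  constructor
  · rcases eq_or_lt_of_le hz.1 with h | h
    · rw [← h, hGu]
    · exact (hgt z hz.2 h).le
  · rcases eq_or_lt_of_le hz.2 with h | h
    · rw [h, hGv]
    · exact (hlt z (le_trans hxu hz.1) h).le

private lemma fixedpt {G : ℝ → ℝ} (hG : Continuous G) {u v : ℝ} (huv : u ≤ v)
    (h1 : G u ≤ u) (h2 : v ≤ G v) : ∃ x ∈ Set.Icc u v, G x = x := by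
  have hc : ContinuousOn (fun z => G z - z) (Set.Icc u v) :=
    (hG.sub continuous_id).continuousOn
  obtain ⟨x, hx, hx0⟩ := intermediate_value_Icc huv hc
    (Set.mem_Icc.mpr ⟨sub_nonpos.mpr h1, sub_nonneg.mpr h2⟩)
  refine ⟨x, hx, ?_⟩
  have : G x - x = 0 := hx0
  linarith

private lemma chain (F : ℝ → ℝ) (hF : Continuous F) (Af Bf : ℕ → ℝ) (tm : ℕ → ℕ)
    (h0 : tm 0 = 0) :
    ∀ k, (∀ j, j ≤ k → Af j ≤ Bf j) → (∀ j, j < k → tm j ≤ tm (j + 1)) →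
    (∀ j, j < k → PosCovers F^[tm (j + 1) - tm j]
        (Set.Icc (Af j) (Bf j)) (Set.Icc (Af (j + 1)) (Bf (j + 1)))) →
    ∃ u v, u ≤ v ∧
      (∀ j, j ≤ k → ∀ z ∈ Set.Icc u v, F^[tm j] z ∈ Set.Icc (Af j) (Bf j)) ∧
      F^[tm k] u = Af k ∧ F^[tm k] v = Bf k := by
  intro k
  induction k with
  | zero =>
    intro hAB _ _
    refine ⟨Af 0, Bf 0, hAB 0 le_rfl, ?_, ?_, ?_⟩
    · intro j hj z hz
      have hj0 : j = 0 := by omega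
      subst hj0
      simpa [h0] using hz
    · simp [h0]
    · simp [h0]
  | succ k ih =>
    intro hAB hmono hcv
    obtain ⟨u', v', huv', hmem, hu', hv'⟩ :=
      ih (fun j hj => hAB j (by omega)) (fun j hj => hmono j (by omega))
         (fun j hj => hcv j (by omega))
    have hABk1 := hAB (k + 1) le_rfl
    obtain ⟨xc, hxc, yc, hyc, hxyc, hc1, hc2⟩ := hcv k (Nat.lt_succ_self _)
    rw [csInf_Icc hABk1] at hc1
    rw [csSup_Icc hABk1] at hc2
    obtain ⟨α, β, hxa, hab, hby, hGa, hGb, himg⟩ :=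
      pullback (hF.iterate (tm (k + 1) - tm k)) hxyc hABk1 hc1 hc2
    have hαI : Af k ≤ α := le_trans hxc.1 hxa
    have hβI : β ≤ Bf k := le_trans hby hyc.2
    obtain ⟨u, v, h1, h2, h3, hGu, hGv, himg2⟩ :=
      pullback (hF.iterate (tm k)) huv' hab
        (by rw [hu']; exact hαI) (by rw [hv']; exact hβI)
    have hsum : tm (k + 1) = (tm (k + 1) - tm k) + tm k := by
      have := hmono k (Nat.lt_succ_self _); omega
    refine ⟨u, v, h2, ?_, ?_, ?_⟩
    · intro j hj z hz
      by_cases hjk : j = k + 1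
      · subst hjk
        rw [hsum, Function.iterate_add_apply]
        exact himg _ (himg2 z hz)
      · have hjk' : j ≤ k := by omega
        exact hmem j hjk' z ⟨le_trans h1 hz.1, le_trans hz.2 h3⟩
    · rw [hsum, Function.iterate_add_apply, hGu, hGa]
    · rw [hsum, Function.iterate_add_apply, hGv, hGb]

private lemma div_add_le (x c d : ℕ) (hd : 0 < d) : (x + c) / d ≤ x / d + c / d + 1 := by
  rw [Nat.add_div hd]
  split <;> omega

private lemma exists_good (n d p : ℕ) (B : Finset ℕ) (hn : 1 ≤ n) (hd : 0 < d)
    (hp2 : 2 ≤ p) (hBn : ∀ b ∈ B, n ≤ b)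
    (hnum : (2 * n ≤ d ∧ B.card + 2 ≤ p) ∨
      (d < 2 * n ∧ 2 * n * (2 * B.card + 1) ≤ d * (p - 1))) :
    ∃ l, 1 ≤ l ∧ l ≤ p - 1 ∧ n ≤ l * d ∧ l * d + n ≤ d * p ∧
      ∀ b ∈ B, l * d + n ≤ b ∨ b + n ≤ l * d := by
  classical
  by_contra hcon
  push_neg at hcon
  set S := Finset.Icc 1 (p - 1) with hSdef
  set Alo := S.filter (fun l => l * d < n) with hAlodef
  set Ahi := S.filter (fun l => d * p < l * d + n) with hAhidef
  set Ab : ℕ → Finset ℕ := fun b => S.filter (fun l => b < l * d + n ∧ l * d < b + n) with hAbdef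
  have cover : S ⊆ Alo ∪ Ahi ∪ B.biUnion Ab := by
    intro l hl
    obtain ⟨hl1, hl2⟩ := Finset.mem_Icc.mp hl
    by_cases c1 : l * d < n
    · exact Finset.mem_union_left _ (Finset.mem_union_left _ (Finset.mem_filter.mpr ⟨hl, c1⟩))
    by_cases c2 : d * p < l * d + n
    · exact Finset.mem_union_left _ (Finset.mem_union_right _ (Finset.mem_filter.mpr ⟨hl, c2⟩))
    obtain ⟨b, hb, hb1, hb2⟩ := hcon l hl1 hl2 (le_of_not_gt c1) (le_of_not_gt c2)
    exact Finset.mem_union_right _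
      (Finset.mem_biUnion.mpr ⟨b, hb, Finset.mem_filter.mpr ⟨hl, hb1, hb2⟩⟩)
  have hcardS : S.card = p - 1 := by rw [hSdef, Nat.card_Icc]; omega
  have hAloCard : Alo.card ≤ (n - 1) / d := by
    have hsub : Alo ⊆ Finset.Icc 1 ((n - 1) / d) := by
      intro l hl
      obtain ⟨hlS, hld⟩ := Finset.mem_filter.mp hl
      obtain ⟨hl1, _⟩ := Finset.mem_Icc.mp hlS
      refine Finset.mem_Icc.mpr ⟨hl1, ?_⟩
      rw [Nat.le_div_iff_mul_le hd]
      set X := l * d with hX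
      omega
    calc Alo.card ≤ _ := Finset.card_le_card hsub
    _ = (n - 1) / d := by rw [Nat.card_Icc]; simp
  have hAhiCard : Ahi.card ≤ (n - 1) / d := by
    have hmaps : ∀ l ∈ Ahi, p - l ∈ Finset.Icc 1 ((n - 1) / d) := by
      intro l hl
      obtain ⟨hlS, hld⟩ := Finset.mem_filter.mp hl
      obtain ⟨hl1, hl2⟩ := Finset.mem_Icc.mp hlS
      refine Finset.mem_Icc.mpr ⟨by omega, ?_⟩
      rw [Nat.le_div_iff_mul_le hd]
      have hsplit : l * d + (p - l) * d = d * p := by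
        rw [← Nat.add_mul]
        rw [Nat.add_sub_cancel' (by omega : l ≤ p)]
        exact Nat.mul_comm p d
      set X := l * d with hX
      set Y := (p - l) * d with hY
      set Z := d * p with hZ
      omega
    have hinj : Set.InjOn (fun l => p - l) ↑Ahi := by
      intro a ha b hb hab
      obtain ⟨haS, _⟩ := Finset.mem_filter.mp ha
      obtain ⟨ha1, ha2⟩ := Finset.mem_Icc.mp haS
      obtain ⟨hbS, _⟩ := Finset.mem_filter.mp hb
      obtain ⟨hb1, hb2⟩ := Finset.mem_Icc.mp hbS
      simp only at hab
      omega
    calc Ahi.card ≤ (Finset.Icc 1 ((n - 1) / d)).card :=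
          Finset.card_le_card_of_injOn _ hmaps hinj
    _ = (n - 1) / d := by rw [Nat.card_Icc]; simp
  have hAbCard : ∀ b ∈ B, (Ab b).card ≤ (b + n - 1) / d - (b - n) / d := by
    intro b hb
    have hbn := hBn b hb
    have hsub : Ab b ⊆ Finset.Ioc ((b - n) / d) ((b + n - 1) / d) := by
      intro l hl
      obtain ⟨hlS, hc1, hc2⟩ := Finset.mem_filter.mp hl
      refine Finset.mem_Ioc.mpr ⟨?_, ?_⟩
      · rw [Nat.div_lt_iff_lt_mul hd]
        set X := l * d with hX
        omega
      · rw [Nat.le_div_iff_mul_le hd]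
        set X := l * d with hX
        omega
    calc (Ab b).card ≤ _ := Finset.card_le_card hsub
    _ = (b + n - 1) / d - (b - n) / d := Nat.card_Ioc _ _
  have hbiu : (B.biUnion Ab).card ≤ ∑ b ∈ B, ((b + n - 1) / d - (b - n) / d) :=
    le_trans Finset.card_biUnion_le (Finset.sum_le_sum hAbCard)
  have htot : p - 1 ≤ (n - 1) / d + (n - 1) / d + ∑ b ∈ B, ((b + n - 1) / d - (b - n) / d) := by
    calc p - 1 = S.card := hcardS.symm
    _ ≤ (Alo ∪ Ahi ∪ B.biUnion Ab).card := Finset.card_le_card cover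
    _ ≤ (Alo ∪ Ahi).card + (B.biUnion Ab).card := Finset.card_union_le _ _
    _ ≤ (Alo.card + Ahi.card) + (B.biUnion Ab).card :=
        Nat.add_le_add_right (Finset.card_union_le _ _) _
    _ ≤ (n - 1) / d + (n - 1) / d + ∑ b ∈ B, ((b + n - 1) / d - (b - n) / d) :=
        add_le_add (add_le_add hAloCard hAhiCard) hbiu
  rcases hnum with ⟨hda, hpa⟩ | ⟨hdb, hnum2⟩
  · -- wide regime : each zone kills at most one multiple
    have hz : (n - 1) / d = 0 := Nat.div_eq_of_lt (by omega)
    have hone : ∀ b ∈ B, (b + n - 1) / d - (b - n) / d ≤ 1 := by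
      intro b hb
      have hbn := hBn b hb
      have h1 : b + n - 1 ≤ (b - n) + d := by omega
      have h2 : (b + n - 1) / d ≤ ((b - n) + d) / d := Nat.div_le_div_right h1
      rw [Nat.add_div_right _ hd] at h2
      omega
    have hsum1 : ∑ b ∈ B, ((b + n - 1) / d - (b - n) / d) ≤ ∑ _b ∈ B, 1 :=
      Finset.sum_le_sum hone
    rw [Finset.sum_const, smul_eq_mul, mul_one] at hsum1
    have htotA : p - 1 ≤ (n - 1) / d + (n - 1) / d + B.card :=
      le_trans htot (add_le_add (le_refl _) hsum1)
    rw [hz] at htotA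
    omega
  · -- narrow regime : count multiples in each zone
    have hperb : ∀ b ∈ B, (b + n - 1) / d - (b - n) / d ≤ (2 * n - 1) / d + 1 := by
      intro b hb
      have hbn := hBn b hb
      have he : b + n - 1 = (b - n) + (2 * n - 1) := by omega
      have h2 := div_add_le (b - n) (2 * n - 1) d hd
      rw [← he] at h2
      revert h2
      generalize (b + n - 1) / d = u
      generalize (b - n) / d = v
      generalize (2 * n - 1) / d = w
      intro h2
      omega
    have hsum2 : ∑ b ∈ B, ((b + n - 1) / d - (b - n) / d) ≤ B.card * ((2 * n - 1) / d + 1) := by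
      calc _ ≤ ∑ _b ∈ B, ((2 * n - 1) / d + 1) := Finset.sum_le_sum hperb
      _ = B.card * ((2 * n - 1) / d + 1) := by rw [Finset.sum_const, smul_eq_mul]
    have htot2 : p - 1 ≤ (n - 1) / d + (n - 1) / d + B.card * ((2 * n - 1) / d + 1) :=
      le_trans htot (add_le_add (le_refl _) hsum2)
    have k1 : d * ((n - 1) / d) ≤ n - 1 := Nat.mul_div_le _ _
    have k2 : d * ((2 * n - 1) / d) ≤ 2 * n - 1 := Nat.mul_div_le _ _
    have e1 : d * ((n - 1) / d + (n - 1) / d + B.card * ((2 * n - 1) / d + 1)) =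
        2 * (d * ((n - 1) / d)) + B.card * (d * ((2 * n - 1) / d)) + B.card * d := by ring
    have b2 : B.card * (d * ((2 * n - 1) / d)) ≤ B.card * (2 * n - 1) :=
      Nat.mul_le_mul_left _ k2
    have b3 : B.card * d ≤ B.card * (2 * n - 1) := Nat.mul_le_mul_left _ (by omega)
    have hfin : d * (p - 1) ≤ 2 * (n - 1) + B.card * (2 * n - 1) + B.card * (2 * n - 1) := by
      calc d * (p - 1) ≤ d * ((n - 1) / d + (n - 1) / d + B.card * ((2 * n - 1) / d + 1)) :=
            Nat.mul_le_mul_left _ htot2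
      _ = 2 * (d * ((n - 1) / d)) + B.card * (d * ((2 * n - 1) / d)) + B.card * d := e1
      _ ≤ 2 * (n - 1) + B.card * (2 * n - 1) + B.card * (2 * n - 1) :=
            add_le_add (add_le_add (by omega) b2) b3
    -- contradiction : 2n(2c+1) ≤ d(p-1) ≤ 2(n-1) + 2c(2n-1)
    obtain ⟨n', rfl⟩ : ∃ n', n = n' + 1 := ⟨n - 1, by omega⟩
    have e2 : 2 * (n' + 1) - 1 = 2 * n' + 1 := by omega
    have e3 : n' + 1 - 1 = n' := by omega
    rw [e2, e3] at hfin
    have hnum2' : 2 * (n' + 1) * (2 * B.card + 1) ≤ d * (p - 1) := hnum2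
    nlinarith [hfin, hnum2']

private lemma build (n m : ℕ) (g : ℕ → ℕ) (r : ℕ) (hn : 1 ≤ n) (hm2 : 2 ≤ m)
    (hyp : n = 1 ∨ (51 * n ≤ m ∧ n * n ≤ m))
    (hgP : ∀ j, j < r → (g j).Prime)
    (hgdvd : ∀ j, j < r → g j ∣ m)
    (hgmono : ∀ j k, j < k → k < r → g j < g k)
    (hg0 : ∀ j, j < r → j + 2 ≤ g j)
    (hg2 : ∀ j, 2 ≤ j → j < r → 2 * j + 1 ≤ g j)
    (hbig : ∀ i, 7 ≤ i → i < r → (8 * i + 4) ^ 2 ≤ m) :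
    ∀ i, i ≤ r → ∃ B : Finset ℕ, B.card ≤ i ∧
      (∀ b ∈ B, n ≤ b ∧ b + n ≤ m) ∧
      (∀ b ∈ B, ∀ b' ∈ B, b < b' → b + n ≤ b') ∧
      (∀ j, j < i → ∃ b ∈ B, m / g j ∣ b) := by
  intro i
  induction i with
  | zero => exact fun _ => ⟨∅, by simp, by simp, by simp, by simp⟩
  | succ i ih =>
    intro hir
    obtain ⟨B, hcard, hP1, hP2, hP3⟩ := ih (by omega)
    have hiR : i < r := by omega
    have hpP := hgP i hiR
    have hpdvd := hgdvd i hiR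
    have hp2 : 2 ≤ g i := hpP.two_le
    have hdp : (m / g i) * g i = m := Nat.div_mul_cancel hpdvd
    have hd1 : 1 ≤ m / g i := by
      rcases Nat.eq_zero_or_pos (m / g i) with h | h
      · rw [h] at hdp; omega
      · exact h
    by_cases hdone : m / g i = 1
    · -- m is prime, so i = 0 and B = ∅
      have hpm : g i = m := by
        rw [← hdp, hdone, one_mul]
      have hi0 : i = 0 := by
        by_contra h
        have hmono0 := hgmono 0 i (by omega) hiR
        have h0P := hgP 0 (by omega)
        have h0d := hgdvd 0 (by omega)
        have hmP : Nat.Prime m := hpm ▸ hpP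
        rcases (Nat.Prime.eq_one_or_self_of_dvd hmP _ h0d) with h1 | h1
        · exact h0P.ne_one h1
        · omega
      subst hi0
      have hBempty : B = ∅ := Finset.card_eq_zero.mp (by omega)
      have h2n : n + n ≤ m := by
        rcases hyp with h | ⟨h, _⟩ <;> omega
      refine ⟨{n}, by simp, ?_, ?_, ?_⟩
      · intro b hb
        rw [Finset.mem_singleton] at hb
        subst hb
        exact ⟨le_rfl, h2n⟩
      · intro b hb b' hb'
        rw [Finset.mem_singleton] at hb hb'
        omega
      · intro j hj
        have hj0 : j = 0 := by omega
        subst hj0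
        refine ⟨n, Finset.mem_singleton_self n, ?_⟩
        rw [hdone]
        exact one_dvd n
    · have hd2 : 2 ≤ m / g i := by omega
      have hkey : (2 * n ≤ m / g i ∧ B.card + 2 ≤ g i) ∨
          (m / g i < 2 * n ∧ 2 * n * (2 * B.card + 1) ≤ (m / g i) * (g i - 1)) := by
        by_cases hreg : 2 * n ≤ m / g i
        · left
          have := hg0 i hiR
          exact ⟨hreg, by omega⟩
        · right
          push_neg at hreg
          refine ⟨hreg, ?_⟩
          have hn2 : 2 ≤ n := by omega
          have h51 : 51 * n ≤ m ∧ n * n ≤ m := by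
            rcases hyp with h | h
            · omega
            · exact h
          have hmono' : 2 * n * (2 * B.card + 1) ≤ 2 * n * (2 * i + 1) :=
            Nat.mul_le_mul_left _ (by omega)
          refine le_trans hmono' ?_
          by_cases hi7 : i ≤ 6
          · -- small index : use m ≥ 51 n
            have hclaim : 2 * (2 * i + 1) * g i ≤ 51 * (g i - 1) := by
              interval_cases i
              · omega
              · have := hg0 1 hiR; omega
              · have := hg2 2 le_rfl hiR; omega
              · have := hg2 3 (by omega) hiR; omega
              · have := hg2 4 (by omega) hiR; omega
              · have := hg2 5 (by omega) hiR; omega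
              · have := hg2 6 (by omega) hiR; omega
            have step : (2 * n * (2 * i + 1)) * g i ≤ ((m / g i) * (g i - 1)) * g i := by
              calc (2 * n * (2 * i + 1)) * g i = n * (2 * (2 * i + 1) * g i) := by ring
              _ ≤ n * (51 * (g i - 1)) := Nat.mul_le_mul_left _ hclaim
              _ = (51 * n) * (g i - 1) := by ring
              _ ≤ m * (g i - 1) := Nat.mul_le_mul_right _ h51.1
              _ = ((m / g i) * (g i - 1)) * g i := by
                  conv_lhs => rw [← hdp]
                  ring
            exact Nat.le_of_mul_le_mul_right step (by omega)
          · -- large index : use m ≥ (8i+4)^2 or m ≥ n^2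
            have hbig' := hbig i (by omega) hiR
            have hm48 : n * (8 * i + 4) ≤ m := by
              rcases le_or_gt (8 * i + 4) n with h | h
              · calc n * (8 * i + 4) ≤ n * n := Nat.mul_le_mul_left _ h
                _ ≤ m := h51.2
              · calc n * (8 * i + 4) ≤ (8 * i + 4) * (8 * i + 4) :=
                    Nat.mul_le_mul_right _ h.le
                _ = (8 * i + 4) ^ 2 := (sq (8 * i + 4)).symm
                _ ≤ m := hbig'
            have h2d : m ≤ 2 * ((m / g i) * (g i - 1)) := by
              calc m = (m / g i) * g i := hdp.symm
              _ ≤ (m / g i) * (2 * (g i - 1)) := Nat.mul_le_mul_left _ (by omega)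
              _ = 2 * ((m / g i) * (g i - 1)) := by ring
            have hfin2 : 2 * (2 * n * (2 * i + 1)) ≤ 2 * ((m / g i) * (g i - 1)) := by
              calc 2 * (2 * n * (2 * i + 1)) = n * (8 * i + 4) := by ring
              _ ≤ m := hm48
              _ ≤ 2 * ((m / g i) * (g i - 1)) := h2d
            exact Nat.le_of_mul_le_mul_left hfin2 (by omega)
      obtain ⟨l, hl1, hl2, hl3, hl4, hl5⟩ :=
        exists_good n (m / g i) (g i) B hn (by omega) hp2 (fun b hb => (hP1 b hb).1) hkey
      refine ⟨insert (l * (m / g i)) B, ?_, ?_, ?_, ?_⟩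
      · calc (insert (l * (m / g i)) B).card ≤ B.card + 1 := Finset.card_insert_le _ _
        _ ≤ i + 1 := by omega
      · intro b hb
        rcases Finset.mem_insert.mp hb with h | h
        · subst h
          refine ⟨hl3, ?_⟩
          have hcomm : (m / g i) * g i = m := hdp
          have hmul : (m / g i) * g i = g i * (m / g i) := Nat.mul_comm _ _
          have := hl4
          omega
        · exact hP1 b h
      · intro b hb b' hb'
        rcases Finset.mem_insert.mp hb with h | h <;>
          rcases Finset.mem_insert.mp hb' with h' | h'
        · intro hlt; omega
        · intro hlt
          rcases hl5 b' h' with hc | hc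
          · subst h; omega
          · subst h; omega
        · intro hlt
          rcases hl5 b h with hc | hc
          · subst h'; omega
          · subst h'; omega
        · exact hP2 b h b' h'
      · intro j hj
        by_cases hji : j = i
        · rw [hji]
          exact ⟨l * (m / g i), Finset.mem_insert_self _ _, dvd_mul_left _ _⟩
        · obtain ⟨b, hb, hbd⟩ := hP3 j (by omega)
          exact ⟨b, Finset.mem_insert_of_mem hb, hbd⟩

private lemma exists_B (n m : ℕ) (hn : 1 ≤ n) (hm2 : 2 ≤ m)
    (hyp : n = 1 ∨ (51 * n ≤ m ∧ n * n ≤ m)) :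
    ∃ B : Finset ℕ, B.Nonempty ∧
      (∀ b ∈ B, n ≤ b ∧ b + n ≤ m) ∧
      (∀ b ∈ B, ∀ b' ∈ B, b < b' → b + n ≤ b') ∧
      (∀ p : ℕ, p.Prime → p ∣ m → ∃ b ∈ B, m / p ∣ b) := by
  classical
  set L := Finset.sort m.primeFactors (· ≤ ·) with hLdef
  set r := L.length with hrdef
  set g : ℕ → ℕ := fun j => L.getD j 0 with hgdef
  have hget : ∀ j, (hj : j < r) → g j = L.get ⟨j, hj⟩ := by
    intro j hj
    simp only [hgdef]
    exact List.getD_eq_getElem L 0 hj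
  have hmem : ∀ j, j < r → g j ∈ m.primeFactors := by
    intro j hj
    rw [hget j hj]
    exact (Finset.mem_sort (α := ℕ) (· ≤ ·)).mp (List.get_mem L ⟨j, hj⟩)
  have hgP : ∀ j, j < r → (g j).Prime := fun j hj =>
    (Nat.mem_primeFactors.mp (hmem j hj)).1
  have hgdvd : ∀ j, j < r → g j ∣ m := fun j hj =>
    (Nat.mem_primeFactors.mp (hmem j hj)).2.1
  have hsortlt : List.Pairwise (· < ·) L := m.primeFactors.sortedLT_sort.pairwise
  have hgmono : ∀ j k, j < k → k < r → g j < g k := by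
    intro j k hjk hkr
    rw [hget j (by omega), hget k hkr]
    exact List.pairwise_iff_get.mp hsortlt ⟨j, by omega⟩ ⟨k, hkr⟩ hjk
  have hg0 : ∀ j, j < r → j + 2 ≤ g j := by
    intro j
    induction j with
    | zero => intro h; exact (hgP 0 h).two_le
    | succ j ihj =>
      intro h
      have h1 := ihj (by omega)
      have h2 := hgmono j (j + 1) (by omega) h
      omega
  have hg2 : ∀ j, 2 ≤ j → j < r → 2 * j + 1 ≤ g j := by
    intro j
    induction j with
    | zero => omega
    | succ j ihj =>
      intro h2j hjr
      rcases Nat.lt_or_ge j 2 with hj2 | hj2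
      · have hj1 : j = 1 := by omega
        subst hj1
        show 2 * 2 + 1 ≤ g 2
        have ha := hg0 2 hjr
        have hb := hgP 2 hjr
        rcases Nat.lt_or_ge (g 2) 5 with h | h
        · have h4 : g 2 = 4 := by omega
          rw [h4] at hb
          norm_num at hb
        · omega
      · have h1 := ihj hj2 (by omega)
        have hOj : Odd (g j) := (hgP j (by omega)).odd_of_ne_two (by omega)
        have hOj1 : Odd (g (j + 1)) := by
          have := hgmono j (j + 1) (by omega) hjr
          exact (hgP (j + 1) hjr).odd_of_ne_two (by omega)
        have hlt := hgmono j (j + 1) (by omega) hjr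
        obtain ⟨α, hα⟩ := hOj
        obtain ⟨β, hβ⟩ := hOj1
        omega
  have hQdvd : ∀ i, i < r → (∏ j ∈ Finset.range (i + 1), g j) ∣ m := by
    intro i
    induction i with
    | zero => intro h; simpa using hgdvd 0 h
    | succ i ihi =>
      intro h
      rw [Finset.prod_range_succ]
      have hcop : Nat.Coprime (∏ j ∈ Finset.range (i + 1), g j) (g (i + 1)) := by
        refine Nat.Coprime.symm (Nat.Coprime.prod_right ?_)
        intro j hj
        rw [Finset.mem_range] at hj
        exact (Nat.coprime_primes (hgP (i + 1) h) (hgP j (by omega))).mpr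
          (ne_of_gt (hgmono j (i + 1) hj h))
      exact Nat.Coprime.mul_dvd_of_dvd_of_dvd hcop (ihi (by omega)) (hgdvd (i + 1) h)
  have hQlb : ∀ i, 7 ≤ i → i < r → (8 * i + 4) ^ 2 ≤ ∏ j ∈ Finset.range (i + 1), g j := by
    intro i
    induction i with
    | zero => omega
    | succ i ihi =>
      intro h7 hir
      rcases Nat.lt_or_ge i 7 with hi7 | hi7
      · have hi6 : i = 6 := by omega
        subst hi6
        -- product of the first 8 primes is at least 2*3*5*7*9*11*13*15
        have hlb : ∀ j ∈ Finset.range 8,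
            (if j = 0 then 2 else if j = 1 then 3 else 2 * j + 1) ≤ g j := by
          intro j hj
          rw [Finset.mem_range] at hj
          by_cases h0 : j = 0
          · subst h0; simpa using hg0 0 (by omega)
          by_cases h1 : j = 1
          · subst h1
            simpa using hg0 1 (by omega)
          · have := hg2 j (by omega) (by omega)
            rw [if_neg h0, if_neg h1]
            exact this
        have hprod : (∏ j ∈ Finset.range 8,
            (if j = 0 then 2 else if j = 1 then 3 else 2 * j + 1)) ≤
            ∏ j ∈ Finset.range 8, g j :=
          Finset.prod_le_prod (fun _ _ => Nat.zero_le _) hlb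
        have hval : (∏ j ∈ Finset.range 8,
            (if j = 0 then 2 else if j = 1 then 3 else 2 * j + 1)) = 4054050 := by
          norm_num [Finset.prod_range_succ]
        rw [hval] at hprod
        calc (8 * 7 + 4) ^ 2 = 3600 := by norm_num
        _ ≤ 4054050 := by norm_num
        _ ≤ ∏ j ∈ Finset.range 8, g j := hprod
      · have h1 := ihi hi7 (by omega)
        have h2 := hg2 (i + 1) (by omega) hir
        rw [Finset.prod_range_succ]
        calc (8 * (i + 1) + 4) ^ 2 ≤ (8 * i + 4) ^ 2 * (2 * (i + 1) + 1) := by nlinarith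
        _ ≤ (∏ j ∈ Finset.range (i + 1), g j) * (g (i + 1)) :=
            Nat.mul_le_mul h1 h2
  have hbig : ∀ i, 7 ≤ i → i < r → (8 * i + 4) ^ 2 ≤ m := fun i h7 hir =>
    le_trans (hQlb i h7 hir) (Nat.le_of_dvd (by omega) (hQdvd i hir))
  obtain ⟨B, hc, h1, h2, h3⟩ :=
    build n m g r hn hm2 hyp hgP hgdvd hgmono hg0 hg2 hbig r le_rfl
  have hfind : ∀ p : ℕ, p.Prime → p ∣ m → ∃ b ∈ B, m / p ∣ b := by
    intro p hp hpm
    have hpF : p ∈ m.primeFactors := Nat.mem_primeFactors.mpr ⟨hp, hpm, by omega⟩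
    have hpL : p ∈ L := by rw [hLdef]; exact (Finset.mem_sort (α := ℕ) (· ≤ ·)).mpr hpF
    obtain ⟨⟨j, hj⟩, hgetp⟩ := List.mem_iff_get.mp hpL
    have hgj : g j = p := by rw [hget j hj]; exact hgetp
    obtain ⟨b, hb, hbd⟩ := h3 j hj
    exact ⟨b, hb, by rwa [hgj] at hbd⟩
  have hne : B.Nonempty := by
    obtain ⟨b, hb, _⟩ := hfind m.minFac (Nat.minFac_prime (by omega)) (Nat.minFac_dvd m)
    exact ⟨b, hb⟩
  exact ⟨B, hne, h1, h2, hfind⟩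

/-- If two disjoint compact non-degenerate intervals `I`, `J` both positively
`Fⁿ`-cover both `I` and `J` for every `n ≥ t`, then `F` has a periodic point of
(exact) period `m` in `I` for every `m ≥ max(⌈t⌉², 51⌈t⌉)` (every `m ≥ 1` if `t ≤ 1`). -/
theorem stmt_12 (F : ℝ → ℝ) (hF : Continuous F) (hdeg : ∀ x, F (x + 1) = F x + 1)
    (a₁ b₁ a₂ b₂ : ℝ) (hI : a₁ < b₁) (hJ : a₂ < b₂)
    (hdisj : Disjoint (Set.Icc a₁ b₁) (Set.Icc a₂ b₂))
    (t : ℝ) (ht : 0 < t)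
    (hcov : ∀ n : ℕ, t ≤ (n : ℝ) →
      PosCovers F^[n] (Set.Icc a₁ b₁) (Set.Icc a₁ b₁) ∧
      PosCovers F^[n] (Set.Icc a₁ b₁) (Set.Icc a₂ b₂) ∧
      PosCovers F^[n] (Set.Icc a₂ b₂) (Set.Icc a₁ b₁) ∧
      PosCovers F^[n] (Set.Icc a₂ b₂) (Set.Icc a₂ b₂))
    (m : ℕ) (hm : m ≥ if t ≤ 1 then 1 else max (⌈t⌉₊ ^ 2) (51 * ⌈t⌉₊)) :
    ∃ x ∈ Set.Icc a₁ b₁, F^[m] x = x ∧ ∀ i, 1 ≤ i → i ≤ m - 1 → F^[i] x ≠ x := by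
  classical
  have hIle : a₁ ≤ b₁ := hI.le
  have hJle : a₂ ≤ b₂ := hJ.le
  obtain ⟨n, hn1, hnt, hm1, hmbound⟩ :
      ∃ n : ℕ, 1 ≤ n ∧ t ≤ (n : ℝ) ∧ 1 ≤ m ∧ (n = 1 ∨ (51 * n ≤ m ∧ n * n ≤ m)) := by
    by_cases ht1 : t ≤ 1
    · rw [if_pos ht1] at hm
      exact ⟨1, le_rfl, by exact_mod_cast ht1, hm, Or.inl rfl⟩
    · rw [if_neg ht1] at hm
      push_neg at ht1
      have hceil1 : 1 < ⌈t⌉₊ := Nat.lt_ceil.mpr (by exact_mod_cast ht1)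
      refine ⟨⌈t⌉₊, by omega, Nat.le_ceil t, ?_, Or.inr ⟨?_, ?_⟩⟩
      · have := le_trans (le_max_right _ _) hm
        omega
      · exact le_trans (le_max_right _ _) hm
      · have := le_trans (le_max_left _ _) hm
        rwa [pow_two] at this
  have hcov' : ∀ s : ℕ, n ≤ s →
      (PosCovers F^[s] (Set.Icc a₁ b₁) (Set.Icc a₁ b₁) ∧
       PosCovers F^[s] (Set.Icc a₁ b₁) (Set.Icc a₂ b₂) ∧
       PosCovers F^[s] (Set.Icc a₂ b₂) (Set.Icc a₁ b₁) ∧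
       PosCovers F^[s] (Set.Icc a₂ b₂) (Set.Icc a₂ b₂)) := by
    intro s hs
    exact hcov s (le_trans hnt (by exact_mod_cast hs))
  rcases Nat.lt_or_ge m 2 with hmlt | hm2
  · -- m = 1 : just a fixed point
    have hmeq : m = 1 := by omega
    have hn1' : n = 1 := by
      rcases hmbound with h | ⟨h, _⟩
      · exact h
      · omega
    obtain ⟨xx, hxx, yy, hyy, hxy, hc1, hc2⟩ := (hcov' m (by omega)).1
    rw [csInf_Icc hIle] at hc1
    rw [csSup_Icc hIle] at hc2
    obtain ⟨u, v, hxu, huv, hvy, hGu, hGv, _⟩ :=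
      pullback (hF.iterate m) hxy hIle hc1 hc2
    have huI : a₁ ≤ u := le_trans hxx.1 hxu
    have hvI : v ≤ b₁ := le_trans hvy hyy.2
    obtain ⟨x, hxuv, hxfix⟩ := fixedpt (hF.iterate m) huv
      (by rw [hGu]; exact huI) (by rw [hGv]; exact hvI)
    refine ⟨x, ⟨le_trans huI hxuv.1, le_trans hxuv.2 hvI⟩, hxfix, ?_⟩
    intro i hi1 hi2
    exact absurd hi2 (by omega)
  · -- m ≥ 2 : full construction
    obtain ⟨B, hBne, hBrange, hBgap, hBprime⟩ := exists_B n m hn1 hm2 hmbound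
    set sB := Finset.sort B (· ≤ ·) with hsBdef
    set R := sB.length with hRdef
    have hR1 : 1 ≤ R := by
      obtain ⟨b, hb⟩ := hBne
      have hbs : b ∈ sB := by rw [hsBdef]; exact (Finset.mem_sort (α := ℕ) (· ≤ ·)).mpr hb
      have := List.length_pos_iff.mpr (List.ne_nil_of_mem hbs)
      omega
    set tm : ℕ → ℕ := fun j => if j = 0 then 0 else if j ≤ R then sB.getD (j - 1) 0 else m
      with htmdef
    have htm0 : tm 0 = 0 := rfl
    have htmlast : tm (R + 1) = m := by
      show (if R + 1 = 0 then 0 else if R + 1 ≤ R then sB.getD (R + 1 - 1) 0 else m) = m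
      rw [if_neg (by omega), if_neg (by omega)]
    have htmget : ∀ j, 1 ≤ j → (hj : j ≤ R) → tm j = sB.get ⟨j - 1, by omega⟩ := by
      intro j h1 hj
      show (if j = 0 then 0 else if j ≤ R then sB.getD (j - 1) 0 else m) = _
      rw [if_neg (by omega), if_pos hj]
      exact List.getD_eq_getElem sB 0 _
    have htmmem : ∀ j, 1 ≤ j → j ≤ R → tm j ∈ B := by
      intro j h1 h2
      rw [htmget j h1 h2]
      exact (Finset.mem_sort (α := ℕ) (· ≤ ·)).mp (List.get_mem sB _)
    have hsortlt : List.Pairwise (· < ·) sB := B.sortedLT_sort.pairwise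
    have hgap : ∀ j, j ≤ R → tm j + n ≤ tm (j + 1) := by
      intro j hj
      rcases Nat.eq_zero_or_pos j with rfl | hj0
      · have h1 := htmmem 1 le_rfl hR1
        have h2 := (hBrange _ h1).1
        show tm 0 + n ≤ tm 1
        rw [htm0]
        omega
      rcases Nat.lt_or_ge j R with hjR | hjR
      · have hmem1 := htmmem j (by omega) (by omega)
        have hmem2 := htmmem (j + 1) (by omega) (by omega)
        have hlt : tm j < tm (j + 1) := by
          rw [htmget j (by omega) (by omega), htmget (j + 1) (by omega) (by omega)]
          exact List.pairwise_iff_get.mp hsortlt ⟨j - 1, by omega⟩ ⟨j + 1 - 1, by omega⟩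
            (by simp only [Fin.mk_lt_mk]; omega)
        have := hBgap _ hmem1 _ hmem2 hlt
        omega
      · have hjR' : j = R := by omega
        subst hjR'
        have h1 := htmmem R (by omega) le_rfl
        have := (hBrange _ h1).2
        rw [htmlast]
        omega
    set Af : ℕ → ℝ := fun j => if 1 ≤ j ∧ j ≤ R then a₂ else a₁ with hAfdef
    set Bf : ℕ → ℝ := fun j => if 1 ≤ j ∧ j ≤ R then b₂ else b₁ with hBfdef
    have hAfI : ∀ j, ¬(1 ≤ j ∧ j ≤ R) → Af j = a₁ ∧ Bf j = b₁ := by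
      intro j hjc
      constructor
      · simp only [hAfdef]; rw [if_neg hjc]
      · simp only [hBfdef]; rw [if_neg hjc]
    have hAfJ : ∀ j, (1 ≤ j ∧ j ≤ R) → Af j = a₂ ∧ Bf j = b₂ := by
      intro j hjc
      constructor
      · simp only [hAfdef]; rw [if_pos hjc]
      · simp only [hBfdef]; rw [if_pos hjc]
    have hABle : ∀ j, j ≤ R + 1 → Af j ≤ Bf j := by
      intro j _
      by_cases h : 1 ≤ j ∧ j ≤ R
      · rw [(hAfJ j h).1, (hAfJ j h).2]; exact hJle
      · rw [(hAfI j h).1, (hAfI j h).2]; exact hIle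
    have hcovs : ∀ j, j < R + 1 → PosCovers F^[tm (j + 1) - tm j]
        (Set.Icc (Af j) (Bf j)) (Set.Icc (Af (j + 1)) (Bf (j + 1))) := by
      intro j hj
      have hs : n ≤ tm (j + 1) - tm j := by
        have := hgap j (by omega); omega
      have h4 := hcov' _ hs
      rcases Nat.eq_zero_or_pos j with rfl | hj0
      · rw [(hAfI 0 (by omega)).1, (hAfI 0 (by omega)).2,
          (hAfJ 1 ⟨le_rfl, hR1⟩).1, (hAfJ 1 ⟨le_rfl, hR1⟩).2]
        exact h4.2.1
      rcases Nat.lt_or_ge j R with hjR | hjR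
      · rw [(hAfJ j ⟨by omega, by omega⟩).1, (hAfJ j ⟨by omega, by omega⟩).2,
          (hAfJ (j + 1) ⟨by omega, by omega⟩).1, (hAfJ (j + 1) ⟨by omega, by omega⟩).2]
        exact h4.2.2.2
      · have hjR' : j = R := by omega
        subst hjR'
        rw [(hAfJ R ⟨by omega, le_rfl⟩).1, (hAfJ R ⟨by omega, le_rfl⟩).2,
          (hAfI (R + 1) (by omega)).1, (hAfI (R + 1) (by omega)).2]
        exact h4.2.2.1
    obtain ⟨u, v, huv, hmemc, hAend, hBend⟩ :=
      chain F hF Af Bf tm htm0 (R + 1) hABle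
        (fun j hj => by have := hgap j (by omega); omega) hcovs
    rw [htmlast, (hAfI (R + 1) (by omega)).1] at hAend
    rw [htmlast, (hAfI (R + 1) (by omega)).2] at hBend
    have hzI : ∀ z ∈ Set.Icc u v, z ∈ Set.Icc a₁ b₁ := by
      intro z hz
      have := hmemc 0 (by omega) z hz
      rw [htm0] at this
      simp only [Function.iterate_zero, id] at this
      rwa [(hAfI 0 (by omega)).1, (hAfI 0 (by omega)).2] at this
    have huI := hzI u (Set.left_mem_Icc.mpr huv)
    have hvI := hzI v (Set.right_mem_Icc.mpr huv)
    obtain ⟨x, hxuv, hxfix⟩ := fixedpt (hF.iterate m) huv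
      (by rw [hAend]; exact huI.1) (by rw [hBend]; exact hvI.2)
    have hxI : x ∈ Set.Icc a₁ b₁ := hzI x hxuv
    refine ⟨x, hxI, hxfix, ?_⟩
    intro i hi1 hi2 hfi
    have hmper : Function.IsPeriodicPt F m x := hxfix
    have hiper : Function.IsPeriodicPt F i x := hfi
    have hddper : Function.IsPeriodicPt F (Nat.gcd i m) x := hiper.gcd hmper
    set dd := Nat.gcd i m with hdddef
    have hdd1 : 1 ≤ dd := Nat.gcd_pos_of_pos_left m (by omega)
    have hdddvd : dd ∣ m := Nat.gcd_dvd_right i m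
    have hddlt : dd < m := by
      have h1 : dd ∣ i := Nat.gcd_dvd_left i m
      have h2 := Nat.le_of_dvd (by omega) h1
      omega
    have hmdd : dd * (m / dd) = m := Nat.mul_div_cancel' hdddvd
    have he2 : 2 ≤ m / dd := by
      by_contra hcon2
      push_neg at hcon2
      have hle : dd * (m / dd) ≤ dd * 1 := Nat.mul_le_mul_left _ (by omega)
      rw [hmdd, mul_one] at hle
      omega
    set q := (m / dd).minFac with hqdef
    have hqP : q.Prime := Nat.minFac_prime (by omega)
    have hqe : q ∣ m / dd := Nat.minFac_dvd _
    have hqm : q ∣ m := hqe.trans (Nat.div_dvd_of_dvd hdddvd)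
    have hddq : dd ∣ m / q := by
      obtain ⟨f, hf⟩ := hqe
      have hmf : m = q * (dd * f) := by
        rw [← hmdd, hf]; ring
      refine ⟨f, ?_⟩
      rw [hmf]
      exact Nat.mul_div_cancel_left _ hqP.pos
    obtain ⟨b, hbB, hbd⟩ := hBprime q hqP hqm
    have hddb : dd ∣ b := dvd_trans hddq hbd
    obtain ⟨s, hs⟩ := hddb
    have hper : F^[b] x = x := by
      rw [hs]
      exact hddper.mul_const s
    have hxJ : x ∈ Set.Icc a₂ b₂ := by
      obtain ⟨j, hj1, hj2, hj3⟩ : ∃ j, 1 ≤ j ∧ j ≤ R ∧ tm j = b := by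
        have hbs : b ∈ sB := by
          rw [hsBdef]; exact (Finset.mem_sort (α := ℕ) (· ≤ ·)).mpr hbB
        obtain ⟨⟨j, hjlt⟩, hgetb⟩ := List.mem_iff_get.mp hbs
        refine ⟨j + 1, by omega, by omega, ?_⟩
        rw [htmget (j + 1) (by omega) (by omega)]
        simpa using hgetb
      have hxb := hmemc j (by omega) x hxuv
      rw [hj3, (hAfJ j ⟨hj1, hj2⟩).1, (hAfJ j ⟨hj1, hj2⟩).2] at hxb
      rwa [hper] at hxb
    exact absurd hxJ (Set.disjoint_left.mp hdisj hxI)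
end
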